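/- Let ρ be the Schrödinger representation of the Heisenberg group on L²(ℝⁿ) and let 𝓕 denote the Fourier transform on L²(ℝⁿ). Then for all x, y ∈ ℝⁿ, 𝓕 ρ(x,y,1) = ρ(−y,x,1) 𝓕. -/

import Mathlib

/-!
Both sides are computed on integrable `φ ∈ L²`, where `𝓕` is given by its integral formula:
the substitution `t ↦ t - x` turns the translation by `x` into the character `e^{2πi⟨x,ξ⟩}`, and the
character `e^{2πi⟨y,t⟩}` shifts the frequency `ξ` to `ξ - y`; the leftover constant phases combine
to `e^{πi⟨-y,x⟩}`. Integrable functions are dense in `L²`, so the two continuous operators agree.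
-/

open MeasureTheory Complex

noncomputable section

abbrev En (n : ℕ) : Type := EuclideanSpace ℝ (Fin n)

abbrev L2 (n : ℕ) := Lp ℂ 2 (volume : Measure (En n))

open scoped RealInnerProductSpace

namespace MeasureTheory.Lp

theorem dense_setOf_integrable {α E : Type*} [MeasurableSpace α] [NormedAddCommGroup E]
    {μ : Measure α} {p : ENNReal} [Fact (1 ≤ p)] (hp_ne_top : p ≠ ⊤) :
    Dense {f : Lp E p μ | Integrable f μ} := by
  refine (simpleFunc.dense hp_ne_top).mono fun f hf => ?_
  have hp_ne_zero : p ≠ 0 := (zero_lt_one.trans_le Fact.out).ne'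
  exact ((SimpleFunc.memLp_iff_integrable hp_ne_zero hp_ne_top).mp
    (simpleFunc.memLp ⟨f, hf⟩)).congr (simpleFunc.toSimpleFunc_eq_toFun ⟨f, hf⟩)

end MeasureTheory.Lp

section Schrodinger

variable {V : Type*} [NormedAddCommGroup V] [InnerProductSpace ℝ V]

def schrodingerPhase (x y t : V) : ℂ :=
  exp (Real.pi * I * ((⟪x, y⟫ : ℂ) + 2 * (⟪y, t⟫ : ℂ)))

/-- `ρ(x, y, 1)` acting on functions. -/
def schrodingerAct (x y : V) (φ : V → ℂ) (t : V) : ℂ :=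
  schrodingerPhase x y t * φ (t + x)

def fourierKernel (ξ t : V) : ℂ :=
  exp (-(2 * Real.pi * I * (⟪ξ, t⟫ : ℂ)))

/-- `𝓕` on integrable functions; the Bochner integral makes it `0` elsewhere. -/
def fourierIntegralExp [MeasurableSpace V] (μ : Measure V) (φ : V → ℂ) (ξ : V) : ℂ :=
  ∫ t, fourierKernel ξ t * φ t ∂μ

theorem fourierKernel_mul_schrodingerPhase (x y ξ t : V) :
    fourierKernel ξ (t - x) * schrodingerPhase x y (t - x) =
      schrodingerPhase (-y) x ξ * fourierKernel (ξ - y) t := by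
  simp only [fourierKernel, schrodingerPhase, ← exp_add]
  congr 1
  simp only [inner_sub_right, inner_sub_left, inner_neg_left, real_inner_comm x ξ,
    real_inner_comm x y]
  push_cast
  ring

theorem continuous_schrodingerPhase (x y : V) : Continuous (schrodingerPhase x y) := by
  unfold schrodingerPhase
  fun_prop

theorem norm_schrodingerPhase (x y t : V) : ‖schrodingerPhase x y t‖ = 1 := by
  rw [schrodingerPhase, Complex.norm_exp]
  simp

theorem fourierIntegralExp_congr_ae [MeasurableSpace V] {μ : Measure V} {φ ψ : V → ℂ}
    (h : φ =ᵐ[μ] ψ) : fourierIntegralExp μ φ = fourierIntegralExp μ ψ :=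
  funext fun ξ => integral_congr_ae (h.mono fun t ht => congrArg (fourierKernel ξ t * ·) ht)

variable [MeasurableSpace V] [MeasurableAdd V] {μ : Measure V} [μ.IsAddRightInvariant]

theorem MeasureTheory.Integrable.schrodingerAct [OpensMeasurableSpace V] {φ : V → ℂ}
    (hφ : Integrable φ μ) (x y : V) : Integrable (schrodingerAct x y φ) μ :=
  (hφ.comp_add_right x).bdd_mul (continuous_schrodingerPhase x y).aestronglyMeasurable
    (c := 1) (.of_forall fun t => (norm_schrodingerPhase x y t).le)

theorem Filter.EventuallyEq.schrodingerAct {φ ψ : V → ℂ} (h : φ =ᵐ[μ] ψ) (x y : V) :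
    schrodingerAct x y φ =ᵐ[μ] schrodingerAct x y ψ := by
  filter_upwards [(measurePreserving_add_right μ x).quasiMeasurePreserving.ae h] with t ht
  exact congrArg (schrodingerPhase x y t * ·) ht

theorem fourierIntegralExp_schrodingerAct (φ : V → ℂ) (x y : V) :
    fourierIntegralExp μ (schrodingerAct x y φ) =
      schrodingerAct (-y) x (fourierIntegralExp μ φ) := by
  ext ξ
  simp only [fourierIntegralExp, schrodingerAct]
  rw [← integral_sub_right_eq_self _ x, ← integral_const_mul, ← sub_eq_add_neg]
  refine integral_congr_ae (.of_forall fun t => ?_)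
  simp only [sub_add_cancel, ← mul_assoc, fourierKernel_mul_schrodingerPhase]

end Schrodinger

theorem statement12 (n : ℕ)
    (ρ : En n → En n → (L2 n →L[ℂ] L2 n))
    (hρ : ∀ (x y : En n) (φ : L2 n), ∀ᵐ t ∂(volume : Measure (En n)),
      (ρ x y φ : En n → ℂ) t =
        Complex.exp ((Real.pi : ℂ) * Complex.I *
            (((@inner ℝ _ _ x y : ℝ) : ℂ) + 2 * ((@inner ℝ _ _ y t : ℝ) : ℂ)))
          * (φ : En n → ℂ) (t + x))
    (F : L2 n →L[ℂ] L2 n)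
    (hF : ∀ φ : L2 n, Integrable (φ : En n → ℂ) (volume : Measure (En n)) →
      ∀ᵐ ξ ∂(volume : Measure (En n)),
        (F φ : En n → ℂ) ξ =
          ∫ t : En n,
            Complex.exp (-(2 * (Real.pi : ℂ) * Complex.I *
              ((@inner ℝ _ _ ξ t : ℝ) : ℂ))) * (φ : En n → ℂ) t) :
    ∀ x y : En n, F.comp (ρ x y) = (ρ (-y) x).comp F := by
  intro x y
  refine ContinuousLinearMap.ext_on
    ((Lp.dense_setOf_integrable (by norm_num)).mono Submodule.subset_span) fun φ hφ => ?_
  have hρ_ae : ∀ x y (ψ : L2 n), (ρ x y ψ : En n → ℂ) =ᵐ[volume] schrodingerAct x y ψ := hρ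
  have hF_ae : ∀ ψ : L2 n, Integrable (ψ : En n → ℂ) →
      (F ψ : En n → ℂ) =ᵐ[volume] fourierIntegralExp volume ψ := hF
  apply Lp.ext
  calc (F (ρ x y φ) : En n → ℂ)
      =ᵐ[volume] fourierIntegralExp volume (ρ x y φ) :=
        hF_ae _ ((hφ.schrodingerAct x y).congr (hρ_ae x y φ).symm)
    _ = fourierIntegralExp volume (schrodingerAct x y φ) :=
        fourierIntegralExp_congr_ae (hρ_ae x y φ)
    _ = schrodingerAct (-y) x (fourierIntegralExp volume φ) :=
        fourierIntegralExp_schrodingerAct φ x y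
    _ =ᵐ[volume] schrodingerAct (-y) x (F φ) := (hF_ae φ hφ).symm.schrodingerAct (-y) x
    _ =ᵐ[volume] (ρ (-y) x (F φ) : En n → ℂ) := (hρ_ae (-y) x (F φ)).symm

end
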